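/- Fix n ≥ 3 and ρ* ∈ (0,1)^n. There exist ε > 0 and M > 0 such that for every ρ ∈ [0,1)^n with max_i |ρ_i − g¹_i| < ε, one has for all i ≠ 1: |F_i(ρ) − ρ*_i ρ*_1| ≤ M·(1 − F_1(ρ)). -/

import Mathlib

open Finset

/-- Conditional-mean coefficients for the one-latent-node Gaussian tree model. -/
noncomputable def lam (n : ℕ) (ρ : Fin n → ℝ) (j : Fin n) : ℝ :=
  (ρ j / (1 - ρ j ^ 2)) / (1 + ∑ k, ρ k ^ 2 / (1 - ρ k ^ 2))

/-- Population EM update map `F` for true correlations `ρs`. -/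
noncomputable def emF (n : ℕ) (ρs ρ : Fin n → ℝ) (i : Fin n) : ℝ :=
  (ρ i + ∑ j ∈ Finset.univ.erase i, (ρs i * ρs j - ρ i * ρ j) * lam n ρ j) /
    Real.sqrt (1 + ∑ j, ∑ k ∈ Finset.univ.erase j,
      (ρs j * ρs k - ρ j * ρ k) * lam n ρ j * lam n ρ k)

/-- The boundary fixed point `g¹`: first coordinate `1`, and `ρ*_1 ρ*_j` elsewhere. -/
noncomputable def gvec (n : ℕ) (h : 0 < n) (ρs : Fin n → ℝ) : Fin n → ℝ :=
  fun i => if i = ⟨0, h⟩ then 1 else ρs ⟨0, h⟩ * ρs i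

/-!
Write `t = 1 - ρ₁` (coordinate `1` is index `0` here). Since the normalizer of `lam` is at least
`1 / (1 - ρ₁²) ≥ 1 / (2t)`, every weight `λ_j` with `j ≠ 1` is `O(t)`, and so is `1 - λ₁`. Hence the
numerator of `F_i` differs from `ρ*_i ρ*_1` by `O(t)`, while the cross terms under the square root
and the correction terms in the numerator of `F_1` are `O(ε t)`, being products of two small
factors. For small `ε` the denominator `D` is close to `1` and `1 - F_1 ≥ t / (2D)`, whereas
`|F_i - ρ*_i ρ*_1| = O(t) / D`.
-/

lemma abs_sqrt_one_add_sub_one_le {E : ℝ} (hE : |E| ≤ 1) : |√(1 + E) - 1| ≤ |E| := by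
  have hlow : 1 - |E| ≤ √(1 + E) :=
    (Real.le_sqrt (by linarith) (by linarith [neg_abs_le E])).2
      (by nlinarith [neg_abs_le E, abs_nonneg E])
  have hup : √(1 + E) ≤ 1 + |E| :=
    Real.sqrt_le_iff.2 ⟨by positivity, by nlinarith [le_abs_self E, abs_nonneg E]⟩
  rw [abs_sub_le_iff]
  constructor <;> linarith

lemma abs_div_sub_le_mul_one_sub_div {x y c D K t : ℝ} (hD : 0 < D) (hK : 0 ≤ K)
    (hx : |x - c * D| ≤ K * t) (hgap : t ≤ 2 * (D - y)) :
    |x / D - c| ≤ 2 * K * (1 - y / D) := by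
  have hnum : x / D - c = (x - c * D) / D := by field_simp
  have hden : 1 - y / D = (D - y) / D := by field_simp
  rw [hnum, hden, abs_div, abs_of_pos hD, mul_div_assoc']
  gcongr
  nlinarith

lemma abs_mul_sub_mul_le_one {x y u v : ℝ} (hx : x ∈ Set.Icc (0 : ℝ) 1)
    (hy : y ∈ Set.Icc (0 : ℝ) 1) (hu : u ∈ Set.Icc (0 : ℝ) 1) (hv : v ∈ Set.Icc (0 : ℝ) 1) :
    |x * y - u * v| ≤ 1 :=
  abs_sub_le_of_nonneg_of_le (mul_nonneg hx.1 hy.1) (mul_le_one₀ hx.2 hy.1 hy.2)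
    (mul_nonneg hu.1 hv.1) (mul_le_one₀ hu.2 hv.1 hv.2)

lemma div_one_sub_sq_le {x r : ℝ} (hx : 0 ≤ x) (hxr : x ≤ r) (hr : r < 1) :
    x / (1 - x ^ 2) ≤ r / (1 - r ^ 2) :=
  div_le_div₀ (hx.trans hxr) hxr (by nlinarith) (by nlinarith)

lemma abs_sum_fin_le_mul {n : ℕ} {f : Fin n → ℝ} {C : ℝ} (s : Finset (Fin n)) (hC : 0 ≤ C)
    (hf : ∀ k ∈ s, |f k| ≤ C) : |∑ k ∈ s, f k| ≤ n * C := by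
  calc |∑ k ∈ s, f k| ≤ ∑ k ∈ s, |f k| := abs_sum_le_sum_abs _ _
    _ ≤ s.card • C := sum_le_card_nsmul _ _ _ hf
    _ ≤ n * C := by
      rw [nsmul_eq_mul]
      gcongr
      exact_mod_cast (card_le_univ s).trans (Fintype.card_fin n).le

section lam

variable {n : ℕ} {ρ : Fin n → ℝ}

lemma one_sub_sq_pos (hρ : ∀ i, ρ i ∈ Set.Ico (0 : ℝ) 1) (i : Fin n) : 0 < 1 - ρ i ^ 2 := by
  nlinarith [(hρ i).1, (hρ i).2]

lemma div_one_add_sum_le_mul (hρ : ∀ i, ρ i ∈ Set.Ico (0 : ℝ) 1) {u : ℝ} (hu : 0 ≤ u)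
    (i : Fin n) : u / (1 + ∑ k, ρ k ^ 2 / (1 - ρ k ^ 2)) ≤ u * (1 - ρ i ^ 2) := by
  have hp := one_sub_sq_pos hρ i
  have hterm : ∀ k, 0 ≤ ρ k ^ 2 / (1 - ρ k ^ 2) :=
    fun k => div_nonneg (sq_nonneg _) (one_sub_sq_pos hρ k).le
  have hS : 1 / (1 - ρ i ^ 2) ≤ 1 + ∑ k, ρ k ^ 2 / (1 - ρ k ^ 2) := by
    have hi : 1 / (1 - ρ i ^ 2) = 1 + ρ i ^ 2 / (1 - ρ i ^ 2) := by field_simp; ring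
    rw [hi]
    gcongr
    exact single_le_sum (fun k _ => hterm k) (mem_univ i)
  calc u / (1 + ∑ k, ρ k ^ 2 / (1 - ρ k ^ 2)) ≤ u / (1 / (1 - ρ i ^ 2)) :=
        div_le_div_of_nonneg_left hu (by positivity) hS
    _ = u * (1 - ρ i ^ 2) := by rw [one_div, div_inv_eq_mul]

lemma lam_nonneg (hρ : ∀ i, ρ i ∈ Set.Ico (0 : ℝ) 1) (j : Fin n) : 0 ≤ lam n ρ j :=
  div_nonneg (div_nonneg (hρ j).1 (one_sub_sq_pos hρ j).le)
    (add_nonneg zero_le_one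
      (sum_nonneg fun k _ => div_nonneg (sq_nonneg _) (one_sub_sq_pos hρ k).le))

lemma lam_le_mul (hρ : ∀ i, ρ i ∈ Set.Ico (0 : ℝ) 1) (i j : Fin n) :
    lam n ρ j ≤ ρ j / (1 - ρ j ^ 2) * (1 - ρ i ^ 2) :=
  div_one_add_sum_le_mul hρ (div_nonneg (hρ j).1 (one_sub_sq_pos hρ j).le) i

lemma lam_le_one (hρ : ∀ i, ρ i ∈ Set.Ico (0 : ℝ) 1) (j : Fin n) : lam n ρ j ≤ 1 := by
  have h := lam_le_mul hρ j j
  rw [div_mul_cancel₀ _ (one_sub_sq_pos hρ j).ne'] at h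
  exact h.trans (hρ j).2.le

lemma one_sub_lam_le (hρ : ∀ i, ρ i ∈ Set.Ico (0 : ℝ) 1) (i : Fin n) :
    1 - lam n ρ i ≤ (1 - ρ i) + (∑ k ∈ univ.erase i, ρ k ^ 2 / (1 - ρ k ^ 2)) * (1 - ρ i ^ 2) := by
  have hp := one_sub_sq_pos hρ i
  set K := ∑ k ∈ univ.erase i, ρ k ^ 2 / (1 - ρ k ^ 2)
  have hK : 0 ≤ K := sum_nonneg fun k _ => div_nonneg (sq_nonneg _) (one_sub_sq_pos hρ k).le
  have hsplit : 1 + ∑ k, ρ k ^ 2 / (1 - ρ k ^ 2) = 1 + ρ i ^ 2 / (1 - ρ i ^ 2) + K := by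
    rw [← add_sum_erase _ _ (mem_univ i), add_assoc]
  have hform : 1 - lam n ρ i = ((1 - ρ i) / (1 - ρ i ^ 2) + K) /
      (1 + ∑ k, ρ k ^ 2 / (1 - ρ k ^ 2)) := by
    have hS : 0 < 1 + ρ i ^ 2 / (1 - ρ i ^ 2) + K := by positivity
    rw [lam, hsplit]
    field_simp
    ring
  rw [hform]
  refine (div_one_add_sum_le_mul hρ
    (add_nonneg (div_nonneg (sub_nonneg.2 (hρ i).2.le) hp.le) hK) i).trans ?_
  rw [add_mul, div_mul_cancel₀ _ hp.ne']

noncomputable def emNum (n : ℕ) (ρs ρ : Fin n → ℝ) (i : Fin n) : ℝ :=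
  ρ i + ∑ j ∈ univ.erase i, (ρs i * ρs j - ρ i * ρ j) * lam n ρ j

noncomputable def emCross (n : ℕ) (ρs ρ : Fin n → ℝ) : ℝ :=
  ∑ j, ∑ k ∈ univ.erase j, (ρs j * ρs k - ρ j * ρ k) * lam n ρ j * lam n ρ k

section estimates

variable {n : ℕ} {ρs ρ : Fin n → ℝ} {a : Fin n} {δ L : ℝ}

lemma emF_eq_emNum_div (i : Fin n) : emF n ρs ρ i = emNum n ρs ρ i / √(1 + emCross n ρs ρ) :=
  rfl

lemma abs_emCross_term_le (hρs : ∀ i, ρs i ∈ Set.Icc (0 : ℝ) 1)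
    (hρ : ∀ i, ρ i ∈ Set.Ico (0 : ℝ) 1) (hδ : ∀ k ≠ a, |ρs a * ρs k - ρ a * ρ k| ≤ δ)
    (hL : ∀ j ≠ a, lam n ρ j ≤ L) {j k : Fin n} (hkj : k ≠ j) :
    |(ρs j * ρs k - ρ j * ρ k) * lam n ρ j * lam n ρ k| ≤ δ * L + L ^ 2 := by
  have hlam := lam_nonneg hρ
  have hlam1 := lam_le_one hρ
  rw [abs_mul, abs_mul, abs_of_nonneg (hlam j), abs_of_nonneg (hlam k)]
  rcases eq_or_ne j a with rfl | hja
  · have hc := hδ k hkj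
    have hδ0 : 0 ≤ δ := (abs_nonneg _).trans hc
    calc |ρs j * ρs k - ρ j * ρ k| * lam n ρ j * lam n ρ k ≤ δ * 1 * L :=
          mul_le_mul (mul_le_mul hc (hlam1 j) (hlam j) hδ0) (hL k hkj) (hlam k) (by positivity)
      _ ≤ δ * L + L ^ 2 := by nlinarith [sq_nonneg L]
  have hj := hL j hja
  have hL0 : 0 ≤ L := (hlam j).trans hj
  have hδ0 : 0 ≤ δ := (abs_nonneg _).trans (hδ j hja)
  rcases eq_or_ne k a with rfl | hka
  · have hc : |ρs j * ρs k - ρ j * ρ k| ≤ δ := by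
      rw [mul_comm (ρs j), mul_comm (ρ j)]
      exact hδ j hja
    calc |ρs j * ρs k - ρ j * ρ k| * lam n ρ j * lam n ρ k ≤ δ * L * 1 :=
          mul_le_mul (mul_le_mul hc hj (hlam j) hδ0) (hlam1 k) (hlam k) (by positivity)
      _ ≤ δ * L + L ^ 2 := by nlinarith [sq_nonneg L]
  · have hc : |ρs j * ρs k - ρ j * ρ k| ≤ 1 :=
      abs_mul_sub_mul_le_one (hρs j) (hρs k) (Set.Ico_subset_Icc_self (hρ j))
        (Set.Ico_subset_Icc_self (hρ k))
    calc |ρs j * ρs k - ρ j * ρ k| * lam n ρ j * lam n ρ k ≤ 1 * L * L :=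
          mul_le_mul (mul_le_mul hc hj (hlam j) zero_le_one) (hL k hka) (hlam k) (by positivity)
      _ ≤ δ * L + L ^ 2 := by nlinarith [mul_nonneg hδ0 hL0]

lemma abs_emCross_le (hρs : ∀ i, ρs i ∈ Set.Icc (0 : ℝ) 1)
    (hρ : ∀ i, ρ i ∈ Set.Ico (0 : ℝ) 1) (hδ : ∀ k ≠ a, |ρs a * ρs k - ρ a * ρ k| ≤ δ)
    (hL : ∀ j ≠ a, lam n ρ j ≤ L) (hδ0 : 0 ≤ δ) (hL0 : 0 ≤ L) :
    |emCross n ρs ρ| ≤ n * (n * (δ * L + L ^ 2)) :=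
  abs_sum_fin_le_mul _ (by positivity) fun j _ =>
    abs_sum_fin_le_mul _ (by positivity) fun _ hk =>
      abs_emCross_term_le hρs hρ hδ hL (ne_of_mem_erase hk)

lemma abs_emNum_sub_self_le (hρ : ∀ i, ρ i ∈ Set.Ico (0 : ℝ) 1)
    (hδ : ∀ k ≠ a, |ρs a * ρs k - ρ a * ρ k| ≤ δ) (hL : ∀ j ≠ a, lam n ρ j ≤ L)
    (hδ0 : 0 ≤ δ) (hL0 : 0 ≤ L) :
    |emNum n ρs ρ a - ρ a| ≤ n * (δ * L) := by
  rw [emNum, add_sub_cancel_left]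
  refine abs_sum_fin_le_mul _ (by positivity) fun k hk => ?_
  have hka := ne_of_mem_erase hk
  rw [abs_mul, abs_of_nonneg (lam_nonneg hρ k)]
  exact mul_le_mul (hδ k hka) (hL k hka) (lam_nonneg hρ k) hδ0

lemma abs_emNum_sub_le (hρs : ∀ i, ρs i ∈ Set.Icc (0 : ℝ) 1)
    (hρ : ∀ i, ρ i ∈ Set.Ico (0 : ℝ) 1) (hL : ∀ j ≠ a, lam n ρ j ≤ L) (hL0 : 0 ≤ L)
    {i : Fin n} (hia : i ≠ a) :
    |emNum n ρs ρ i - ρs i * ρs a| ≤ (1 - ρ a) + (1 - lam n ρ a) + n * L := by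
  set R := ∑ j ∈ (univ.erase i).erase a, (ρs i * ρs j - ρ i * ρ j) * lam n ρ j
  have hR : |R| ≤ n * L := by
    refine abs_sum_fin_le_mul _ hL0 fun j hj => ?_
    have hc : |ρs i * ρs j - ρ i * ρ j| ≤ 1 :=
      abs_mul_sub_mul_le_one (hρs i) (hρs j) (Set.Ico_subset_Icc_self (hρ i))
        (Set.Ico_subset_Icc_self (hρ j))
    rw [abs_mul, abs_of_nonneg (lam_nonneg hρ j), ← one_mul L]
    exact mul_le_mul hc (hL j (ne_of_mem_erase hj)) (lam_nonneg hρ j) zero_le_one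
  have hsplit : emNum n ρs ρ i = ρ i + ((ρs i * ρs a - ρ i * ρ a) * lam n ρ a + R) := by
    rw [emNum, ← add_sum_erase _ _ (mem_erase.2 ⟨hia.symm, mem_univ a⟩)]
  obtain ⟨hx0, hx1⟩ := hρ i
  obtain ⟨hy0, hy1⟩ := hρ a
  obtain ⟨hc0, hc1⟩ := hρs i
  obtain ⟨hd0, hd1⟩ := hρs a
  have hl0 := lam_nonneg hρ a
  have hl1 := lam_le_one hρ a
  have hmain : |ρ i * (1 - ρ a * lam n ρ a) - ρs i * ρs a * (1 - lam n ρ a)|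
      ≤ (1 - ρ a) + (1 - lam n ρ a) :=
    abs_sub_le_of_nonneg_of_le (by nlinarith [mul_le_one₀ hy1.le hl0 hl1])
      (by nlinarith [mul_nonneg (sub_nonneg.2 hy1.le) (sub_nonneg.2 hl1),
        mul_le_one₀ hy1.le hl0 hl1])
      (by nlinarith [mul_nonneg hc0 hd0]) (by nlinarith [mul_le_one₀ hc1 hd0 hd1])
  calc |emNum n ρs ρ i - ρs i * ρs a|
      = |(ρ i * (1 - ρ a * lam n ρ a) - ρs i * ρs a * (1 - lam n ρ a)) + R| := by
        rw [hsplit]; ring_nf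
    _ ≤ (1 - ρ a) + (1 - lam n ρ a) + n * L := (abs_add_le _ _).trans (add_le_add hmain hR)

end estimates

section nearBoundary

variable {n : ℕ} {ρs ρ : Fin n → ℝ} {a : Fin n} {B ε : ℝ}

lemma lam_le_of_ne (hρ : ∀ i, ρ i ∈ Set.Ico (0 : ℝ) 1)
    (hB : ∀ j ≠ a, ρ j / (1 - ρ j ^ 2) ≤ B) (hB0 : 0 ≤ B) {j : Fin n} (hja : j ≠ a) :
    lam n ρ j ≤ B * (2 * (1 - ρ a)) :=
  (lam_le_mul hρ a j).trans <|
    mul_le_mul (hB j hja) (by nlinarith [sq_nonneg (1 - ρ a)]) (one_sub_sq_pos hρ a).le hB0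

lemma one_sub_lam_le_of_near (hρ : ∀ i, ρ i ∈ Set.Ico (0 : ℝ) 1)
    (hB : ∀ j ≠ a, ρ j / (1 - ρ j ^ 2) ≤ B) (hB0 : 0 ≤ B) :
    1 - lam n ρ a ≤ (1 + 2 * n * B) * (1 - ρ a) := by
  have hK : ∑ k ∈ univ.erase a, ρ k ^ 2 / (1 - ρ k ^ 2) ≤ n * B := by
    refine (le_abs_self _).trans (abs_sum_fin_le_mul _ hB0 fun k hk => ?_)
    have hp := one_sub_sq_pos hρ k
    rw [abs_of_nonneg (by positivity)]
    refine le_trans ?_ (hB k (ne_of_mem_erase hk))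
    gcongr
    nlinarith [(hρ k).1, (hρ k).2]
  have hsq : 1 - ρ a ^ 2 ≤ 2 * (1 - ρ a) := by nlinarith [sq_nonneg (1 - ρ a)]
  have := mul_le_mul hK hsq (one_sub_sq_pos hρ a).le (by positivity)
  nlinarith [one_sub_lam_le hρ a]

lemma abs_emCross_add_abs_emNum_sub_self_le (hρs : ∀ i, ρs i ∈ Set.Icc (0 : ℝ) 1)
    (hρ : ∀ i, ρ i ∈ Set.Ico (0 : ℝ) 1) (hB : ∀ j ≠ a, ρ j / (1 - ρ j ^ 2) ≤ B) (hB0 : 0 ≤ B)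
    (ht : 1 - ρ a ≤ ε) (hδ : ∀ k ≠ a, |ρs a * ρs k - ρ a * ρ k| ≤ 2 * ε)
    (hε : 4 * n ^ 2 * B * (2 + B) * ε ≤ 1 / 2) :
    |emCross n ρs ρ| + |emNum n ρs ρ a - ρ a| ≤ (1 - ρ a) / 2 := by
  set t := 1 - ρ a
  set L := B * (2 * t)
  have ht0 : 0 ≤ t := by linarith [(hρ a).2]
  have hε0 : 0 ≤ ε := ht0.trans ht
  have hL0 : 0 ≤ L := by positivity
  have hL : ∀ j ≠ a, lam n ρ j ≤ L := fun j hja => lam_le_of_ne hρ hB hB0 hja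
  have hn : (n : ℝ) ≤ n ^ 2 := by
    have : (1 : ℝ) ≤ n := by exact_mod_cast a.pos
    nlinarith
  have hLL : L ^ 2 ≤ B * (2 * ε) * L := by
    rw [sq]; exact mul_le_mul_of_nonneg_right (mul_le_mul_of_nonneg_left (by linarith) hB0) hL0
  calc |emCross n ρs ρ| + |emNum n ρs ρ a - ρ a|
      ≤ n * (n * (2 * ε * L + L ^ 2)) + n * (2 * ε * L) :=
        add_le_add (abs_emCross_le hρs hρ hδ hL (by positivity) hL0)
          (abs_emNum_sub_self_le hρ hδ hL (by positivity) hL0)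
    _ ≤ n ^ 2 * (2 + B) * (2 * ε * L) := by
        nlinarith [mul_le_mul_of_nonneg_left hLL (sq_nonneg (n : ℝ)),
          mul_le_mul_of_nonneg_right hn (by positivity : (0 : ℝ) ≤ 2 * ε * L)]
    _ = 4 * n ^ 2 * B * (2 + B) * ε * t := by ring
    _ ≤ t / 2 := by nlinarith [mul_le_mul_of_nonneg_right hε ht0]

lemma abs_emF_sub_le_of_near (hρs : ∀ i, ρs i ∈ Set.Icc (0 : ℝ) 1)
    (hρ : ∀ i, ρ i ∈ Set.Ico (0 : ℝ) 1) (hB : ∀ j ≠ a, ρ j / (1 - ρ j ^ 2) ≤ B) (hB0 : 0 ≤ B)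
    (ht : 1 - ρ a ≤ ε) (hδ : ∀ k ≠ a, |ρs a * ρs k - ρ a * ρ k| ≤ 2 * ε)
    (hε : 4 * n ^ 2 * B * (2 + B) * ε ≤ 1 / 2) {i : Fin n} (hia : i ≠ a) :
    |emF n ρs ρ i - ρs i * ρs a| ≤ 2 * (3 * (1 + 2 * n * B)) * (1 - emF n ρs ρ a) := by
  have hsmall := abs_emCross_add_abs_emNum_sub_self_le hρs hρ hB hB0 ht hδ hε
  set t := 1 - ρ a
  set E := emCross n ρs ρ
  set D := √(1 + E)
  have ht0 : 0 ≤ t := by linarith [(hρ a).2]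
  have hE : |E| ≤ 1 / 2 := by linarith [abs_nonneg (emNum n ρs ρ a - ρ a), (hρ a).1]
  have hD : |D - 1| ≤ |E| := abs_sqrt_one_add_sub_one_le (by linarith)
  obtain ⟨hD1, hD2⟩ := abs_sub_le_iff.1 hD
  have hnum : |emNum n ρs ρ i - ρs i * ρs a| ≤ (2 + 4 * n * B) * t := by
    have := abs_emNum_sub_le hρs hρ (fun j hja => lam_le_of_ne hρ hB hB0 hja)
      (by positivity) hia
    nlinarith [one_sub_lam_le_of_near hρ hB hB0]
  have hc : |ρs i * ρs a| ≤ 1 := by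
    rw [abs_of_nonneg (mul_nonneg (hρs i).1 (hρs a).1)]
    exact mul_le_one₀ (hρs i).2 (hρs a).1 (hρs a).2
  rw [emF_eq_emNum_div, emF_eq_emNum_div]
  refine abs_div_sub_le_mul_one_sub_div (t := t) (by linarith) (by positivity) ?_ ?_
  · calc |emNum n ρs ρ i - ρs i * ρs a * D|
        = |(emNum n ρs ρ i - ρs i * ρs a) - ρs i * ρs a * (D - 1)| := by ring_nf
      _ ≤ |emNum n ρs ρ i - ρs i * ρs a| + |ρs i * ρs a| * |D - 1| := by
        rw [← abs_mul]; exact abs_sub _ _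
      _ ≤ (2 + 4 * n * B) * t + 1 * |E| :=
        add_le_add hnum (mul_le_mul hc hD (abs_nonneg _) zero_le_one)
      _ ≤ 3 * (1 + 2 * n * B) * t := by
        nlinarith [abs_nonneg (emNum n ρs ρ a - ρ a), mul_nonneg (mul_nonneg n.cast_nonneg hB0) ht0]
  · linarith [le_abs_self (emNum n ρs ρ a - ρ a)]

end nearBoundary

section gvec

variable {n : ℕ} {h : 0 < n} {ρs ρ : Fin n → ℝ} {ε : ℝ}

lemma one_sub_le_of_abs_sub_gvec_lt (hclose : ∀ i, |ρ i - gvec n h ρs i| < ε) :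
    1 - ρ ⟨0, h⟩ ≤ ε := by
  have := hclose ⟨0, h⟩
  rw [gvec, if_pos rfl, abs_sub_lt_iff] at this
  linarith

lemma le_add_of_abs_sub_gvec_lt (hρs : ∀ i, ρs i ∈ Set.Icc (0 : ℝ) 1)
    (hclose : ∀ i, |ρ i - gvec n h ρs i| < ε) {k : Fin n} (hk : k ≠ ⟨0, h⟩) :
    ρ k ≤ ρs ⟨0, h⟩ + ε := by
  have := hclose k
  rw [gvec, if_neg hk, abs_sub_lt_iff] at this
  nlinarith [mul_le_mul_of_nonneg_left (hρs k).2 (hρs ⟨0, h⟩).1]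

lemma abs_mul_sub_mul_le_of_abs_sub_gvec_lt (hρ : ∀ i, ρ i ∈ Set.Ico (0 : ℝ) 1)
    (hclose : ∀ i, |ρ i - gvec n h ρs i| < ε) {k : Fin n} (hk : k ≠ ⟨0, h⟩) :
    |ρs ⟨0, h⟩ * ρs k - ρ ⟨0, h⟩ * ρ k| ≤ 2 * ε := by
  have hk' := hclose k
  rw [gvec, if_neg hk] at hk'
  have ht := one_sub_le_of_abs_sub_gvec_lt hclose
  have hρk : |ρ k - ρ ⟨0, h⟩ * ρ k| ≤ ε := by
    rw [abs_of_nonneg (by nlinarith [(hρ k).1, (hρ ⟨0, h⟩).2])]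
    nlinarith [(hρ k).1, (hρ k).2, (hρ ⟨0, h⟩).2]
  calc |ρs ⟨0, h⟩ * ρs k - ρ ⟨0, h⟩ * ρ k|
      ≤ |ρs ⟨0, h⟩ * ρs k - ρ k| + |ρ k - ρ ⟨0, h⟩ * ρ k| := abs_sub_le _ _ _
    _ ≤ 2 * ε := by rw [abs_sub_comm] at hk'; linarith

end gvec

/-- Near `g¹`, after one EM step the errors of the coordinates `i ≠ 1` are
dominated by the error of the first coordinate:
`|F_i(ρ) − ρ*_i ρ*_1| ≤ M (1 − F_1(ρ))`. -/
theorem em_errors_dominated_near_boundary (n : ℕ) (hn : 3 ≤ n) (ρs : Fin n → ℝ)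
    (hρs : ∀ i, ρs i ∈ Set.Ioo (0 : ℝ) 1) :
    ∃ ε > (0 : ℝ), ∃ M > (0 : ℝ), ∀ ρ : Fin n → ℝ,
      (∀ i, ρ i ∈ Set.Ico (0 : ℝ) 1) →
      (∀ i, |ρ i - gvec n (by omega) ρs i| < ε) →
      ∀ i : Fin n, i ≠ ⟨0, by omega⟩ →
        |emF n ρs ρ i - ρs i * ρs ⟨0, by omega⟩|
          ≤ M * (1 - emF n ρs ρ ⟨0, by omega⟩) := by
  have hρs' : ∀ i, ρs i ∈ Set.Icc (0 : ℝ) 1 := fun i => Set.Ioo_subset_Icc_self (hρs i)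
  obtain ⟨hs0, hs1⟩ := hρs ⟨0, by omega⟩
  set r := (1 + ρs ⟨0, by omega⟩) / 2 with hr
  have hr0 : 0 ≤ r := by linarith
  have hr1 : r < 1 := by linarith
  set B := r / (1 - r ^ 2)
  have hB0 : 0 ≤ B := div_nonneg hr0 (by nlinarith)
  set κ := 4 * (n : ℝ) ^ 2 * B * (2 + B)
  set ε := min ((1 - ρs ⟨0, by omega⟩) / 2) (1 / (2 * κ + 1))
  have hκ : 0 ≤ κ := by positivity
  have hε0 : 0 < ε := lt_min (by linarith) (by positivity)
  have hε : κ * ε ≤ 1 / 2 := by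
    have := (le_div_iff₀ (by positivity)).1 (min_le_right _ _ : ε ≤ 1 / (2 * κ + 1))
    nlinarith
  refine ⟨ε, hε0, 2 * (3 * (1 + 2 * n * B)), by positivity,
    fun ρ hρ hclose i hi => abs_emF_sub_le_of_near hρs' hρ (fun j hj => ?_) hB0
      (one_sub_le_of_abs_sub_gvec_lt hclose)
      (fun k hk => abs_mul_sub_mul_le_of_abs_sub_gvec_lt hρ hclose hk) hε hi⟩
  refine div_one_sub_sq_le (hρ j).1 ?_ hr1
  linarith [le_add_of_abs_sub_gvec_lt hρs' hclose hj, (min_le_left _ _ : ε ≤ (1 - ρs ⟨0, by omega⟩) / 2)]
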